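/- Let p₁ ≥ p₂ ≥ … ≥ pₙ > 0 be the processing times of a Partition instance, let ε be a real with 0 < ε ≤ 1, and set s := ⌈2/ε⌉ − 1; assume s < n. Then the set of makespan values attained by local optima that are not (1+ε) approximations, i.e. {f(x) : x a local optimum with f(x) > (1+ε)·y*}, has cardinality at most 2^{2/ε}. -/

import Mathlib

/-!
If `x` is a local optimum and job `j` sits on the fuller machine, moving `j` must not help, so
`2 f(x) - ∑ p ≤ p_j`. When `f(x) > (1 + ε) y*` this forces `p_j > 2 ε y* ≥ ε ∑ p`; since the times
are sorted, fewer than `s + 1 ≥ 2/ε` jobs are that large, so they are all among the `s` large jobs.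
Hence `f(x)`, the load of the fuller machine, is a subset sum of the large jobs, which leaves at
most `2^s ≤ 2^(2/ε)` values.
-/

/-- The load of machine `b` under assignment `x` (job `i` is on machine `x i`). -/
noncomputable def load {n : ℕ} (p : Fin n → ℝ) (x : Fin n → Bool) (b : Bool) : ℝ :=
  ∑ i ∈ Finset.univ.filter (fun i => x i = b), p i

/-- The makespan of a solution `x` of the Partition instance with processing times `p`. -/
noncomputable def makespan {n : ℕ} (p : Fin n → ℝ) (x : Fin n → Bool) : ℝ :=
  max (load p x false) (load p x true)

/-- `x` is a local optimum: no solution at Hamming distance 1 has strictly smaller makespan. -/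
def IsLocalOpt {n : ℕ} (p : Fin n → ℝ) (x : Fin n → Bool) : Prop :=
  ∀ j : Fin n, ¬ makespan p (Function.update x j (!x j)) < makespan p x

/-- The optimal makespan `y*` of the instance. -/
noncomputable def optMakespan {n : ℕ} (p : Fin n → ℝ) : ℝ :=
  Finset.univ.inf' Finset.univ_nonempty (makespan p)

open Finset

section Partition

variable {n : ℕ} (p : Fin n → ℝ) (x : Fin n → Bool)

lemma load_false_add_load_true : load p x false + load p x true = ∑ i, p i := by
  rw [load, load, ← sum_filter_add_sum_filter_not univ (fun i => x i = false) p]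
  simp only [Bool.not_eq_false]

lemma load_add_load_not (b : Bool) : load p x b + load p x (!b) = ∑ i, p i := by
  cases b
  · exact load_false_add_load_true p x
  · rw [add_comm]; exact load_false_add_load_true p x

lemma makespan_eq_max_load (b : Bool) : makespan p x = max (load p x b) (load p x (!b)) := by
  cases b
  · rfl
  · exact max_comm _ _

lemma exists_load_eq_makespan : ∃ b, load p x b = makespan p x :=
  (max_choice (load p x false) (load p x true)).elim (fun h => ⟨false, h.symm⟩)
    (fun h => ⟨true, h.symm⟩)

lemma sum_le_two_mul_makespan : ∑ i, p i ≤ 2 * makespan p x := by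
  have := load_false_add_load_true p x
  have := le_max_left (load p x false) (load p x true)
  have := le_max_right (load p x false) (load p x true)
  rw [makespan]
  linarith

lemma sum_le_two_mul_optMakespan : ∑ i, p i ≤ 2 * optMakespan p := by
  obtain ⟨x, -, hx⟩ := exists_mem_eq_inf' univ_nonempty (makespan p)
  rw [optMakespan, hx]
  exact sum_le_two_mul_makespan p x

lemma load_update_self (j : Fin n) :
    load p (Function.update x j (!x j)) (x j) = load p x (x j) - p j := by
  have h : univ.filter (fun i => Function.update x j (!x j) i = x j)
      = (univ.filter (fun i => x i = x j)).erase j := by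
    ext i
    rcases eq_or_ne i j with rfl | h
    · simp
    · simp [h]
  rw [load, h, sum_erase_eq_sub (by simp), load]

lemma load_update_not (j : Fin n) :
    load p (Function.update x j (!x j)) (!x j) = load p x (!x j) + p j := by
  have h : univ.filter (fun i => Function.update x j (!x j) i = !x j)
      = insert j (univ.filter (fun i => x i = !x j)) := by
    ext i
    rcases eq_or_ne i j with rfl | h
    · simp
    · simp [h]
  rw [load, h, sum_insert (by simp), load, add_comm]

lemma makespan_update_not (j : Fin n) :
    makespan p (Function.update x j (!x j)) =
      max (load p x (x j) - p j) (load p x (!x j) + p j) := by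
  rw [makespan_eq_max_load _ _ (x j), load_update_self, load_update_not]

variable {p x}

lemma IsLocalOpt.load_le_load_not_add (hx : IsLocalOpt p x) {j : Fin n} (hj : 0 < p j) :
    load p x (x j) ≤ load p x (!x j) + p j := by
  by_contra! h
  apply hx j
  rw [makespan_update_not, makespan_eq_max_load p x (x j)]
  exact max_lt (lt_max_of_lt_left (by linarith)) (lt_max_of_lt_left h)

lemma IsLocalOpt.two_mul_makespan_sub_sum_le (hx : IsLocalOpt p x) {j : Fin n} (hj : 0 < p j)
    (hfull : load p x (x j) = makespan p x) : 2 * makespan p x - ∑ i, p i ≤ p j := by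
  have := hx.load_le_load_not_add hj
  have := load_add_load_not p x (x j)
  linarith

lemma Antitone.succ_mul_le_sum (hp : Antitone p) (h0 : ∀ i, 0 ≤ p i) (j : Fin n) :
    ((j : ℕ) + 1 : ℝ) * p j ≤ ∑ i, p i :=
  calc ((j : ℕ) + 1 : ℝ) * p j = ∑ _i ∈ Iic j, p j := by simp
    _ ≤ ∑ i ∈ Iic j, p i := sum_le_sum fun i hi => hp (mem_Iic.mp hi)
    _ ≤ ∑ i, p i := sum_le_sum_of_subset_of_nonneg (subset_univ _) fun i _ _ => h0 i

lemma IsLocalOpt.val_lt_of_makespan_gt (hpos : ∀ i, 0 < p i) (hp : Antitone p) {ε : ℝ} {s : ℕ}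
    (hs : 2 ≤ ((s : ℝ) + 1) * ε) (hx : IsLocalOpt p x)
    (hbad : (1 + ε) * optMakespan p < makespan p x) {j : Fin n}
    (hfull : load p x (x j) = makespan p x) : (j : ℕ) < s := by
  have hy := sum_le_two_mul_optMakespan p
  have hW : 0 ≤ ∑ i, p i := sum_nonneg fun i _ => (hpos i).le
  have hpj : 2 * ε * optMakespan p < p j := by
    linarith [hx.two_mul_makespan_sub_sum_le (hpos j) hfull]
  by_contra! hjs
  have hsj : ((s : ℝ) + 1) * p j ≤ ∑ i, p i :=
    (mul_le_mul_of_nonneg_right (by exact_mod_cast Nat.succ_le_succ hjs) (hpos j).le).trans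
      (hp.succ_mul_le_sum (fun i => (hpos i).le) j)
  nlinarith [mul_lt_mul_of_pos_left hpj (by positivity : (0 : ℝ) < s + 1)]

end Partition

lemma ncard_le_two_pow_card_of_forall_exists_subset {ι α : Type*} [DecidableEq α]
    (f : Finset ι → α) (L : Finset ι) {Y : Set α} (hY : ∀ y ∈ Y, ∃ S ⊆ L, f S = y) :
    Y.ncard ≤ 2 ^ #L :=
  calc Y.ncard ≤ (L.powerset.image f : Set α).ncard :=
        Set.ncard_le_ncard (fun y hy => by simpa using hY y hy) (finite_toSet _)
    _ ≤ #L.powerset := by rw [Set.ncard_coe_finset]; exact card_image_le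
    _ = 2 ^ #L := card_powerset L

theorem card_bad_localOpt_makespans_le_general
    (n : ℕ) (p : Fin n → ℝ) (hpos : ∀ i, 0 < p i)
    (hmono : ∀ i j : Fin n, i ≤ j → p j ≤ p i)
    (ε : ℝ) (hε0 : 0 < ε)
    (s : ℕ) (hs : (s : ℤ) = ⌈(2 : ℝ) / ε⌉ - 1) :
    (({y : ℝ | ∃ x : Fin n → Bool, IsLocalOpt p x ∧ makespan p x = y ∧
        (1 + ε) * optMakespan p < y}.ncard : ℝ))
      ≤ (2 : ℝ) ^ ((2 : ℝ) / ε) := by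
  classical
  have hsR : (s : ℝ) = ⌈(2 : ℝ) / ε⌉ - 1 := by exact_mod_cast hs
  have hs_le : (s : ℝ) ≤ 2 / ε := by linarith [Int.ceil_lt_add_one ((2 : ℝ) / ε)]
  have hs_ge : 2 ≤ ((s : ℝ) + 1) * ε := by
    rw [← div_le_iff₀ hε0]; linarith [Int.le_ceil ((2 : ℝ) / ε)]
  have hL : #(univ.filter fun i : Fin n => (i : ℕ) < s) ≤ s := by
    rw [Fin.card_filter_val_lt]; exact min_le_right _ _
  have hcard := ncard_le_two_pow_card_of_forall_exists_subset (fun S => ∑ i ∈ S, p i)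
    (univ.filter fun i : Fin n => (i : ℕ) < s) (Y := {y : ℝ | ∃ x : Fin n → Bool,
      IsLocalOpt p x ∧ makespan p x = y ∧ (1 + ε) * optMakespan p < y}) <| by
    rintro _ ⟨x, hx, rfl, hbad⟩
    obtain ⟨b, hb⟩ := exists_load_eq_makespan p x
    refine ⟨univ.filter (x · = b), fun j hj => ?_, hb⟩
    rw [mem_filter] at hj ⊢
    exact ⟨mem_univ j, hx.val_lt_of_makespan_gt hpos hmono hs_ge hbad (hj.2 ▸ hb)⟩
  calc (_ : ℝ) ≤ (2 : ℝ) ^ s := by exact_mod_cast hcard.trans (Nat.pow_le_pow_right two_pos hL)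
    _ = (2 : ℝ) ^ (s : ℝ) := (Real.rpow_natCast 2 s).symm
    _ ≤ (2 : ℝ) ^ ((2 : ℝ) / ε) := Real.rpow_le_rpow_of_exponent_le one_le_two hs_le

/-- The number of distinct makespan values attained by local optima that are not
`(1+ε)` approximations is at most `2^(2/ε)`. -/
theorem card_bad_localOpt_makespans_le
    (n : ℕ) (p : Fin n → ℝ) (hpos : ∀ i, 0 < p i)
    (hmono : ∀ i j : Fin n, i ≤ j → p j ≤ p i)
    (ε : ℝ) (hε0 : 0 < ε) (hε1 : ε ≤ 1)
    (s : ℕ) (hs : (s : ℤ) = ⌈(2 : ℝ) / ε⌉ - 1) (hsn : s < n) :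
    (({y : ℝ | ∃ x : Fin n → Bool, IsLocalOpt p x ∧ makespan p x = y ∧
        (1 + ε) * optMakespan p < y}.ncard : ℝ))
      ≤ (2 : ℝ) ^ ((2 : ℝ) / ε) :=
  card_bad_localOpt_makespans_le_general n p hpos hmono ε hε0 s hs
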